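/- Let Y : [-1,1] → ℝ be the unique twice continuously differentiable solution of L[Y](x) = 3|x| on [-1,1]. Then Y(x) > |x| for every x ∈ [-1,1]. Equivalently, the functions U₁ := Y - x and V₁ := Y + x, which satisfy L[U₁] = 3(|x| - x) and L[V₁] = 3(|x| + x), are strictly positive on all of [-1,1]. (Geometrically: to first order in ε the generalized apparent horizon Ŝ_ε of the perturbed Kruskal slice lies entirely inside the domain of outer communications {û > 0, v̂ > 0} of the Kruskal spacetime, since û = ε U₁ + o(ε) and v̂ = ε V₁ + o(ε) on Ŝ_ε.) -/

import Mathlib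

open Set

/-- The linearized generalized-apparent-horizon operator
`L[z](x) = -(1 - x²) z''(x) + 2x z'(x) + z(x)`, written in terms of
given derivative functions `z'`, `z''`. -/
noncomputable def Lop (z z' z'' : ℝ → ℝ) (x : ℝ) : ℝ :=
  -(1 - x ^ 2) * z'' x + 2 * x * z' x + z x

/-- `z` is twice continuously differentiable on `[-1,1]`, with first derivative `z'`
and second derivative `z''`. -/
def IsC2On (z z' z'' : ℝ → ℝ) : Prop :=
  (∀ x ∈ Icc (-1 : ℝ) 1, HasDerivWithinAt z (z' x) (Icc (-1 : ℝ) 1) x) ∧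
  (∀ x ∈ Icc (-1 : ℝ) 1, HasDerivWithinAt z' (z'' x) (Icc (-1 : ℝ) 1) x) ∧
  ContinuousOn z'' (Icc (-1 : ℝ) 1)

/-!
At a minimum point `c` of `u` on `[-1,1]` one has `L[u](c) ≤ u(c)`: `c u'(c) ≤ 0` because `u`
cannot decrease from `c` towards `0`, and `(1 - c²) u''(c) ≥ 0` because `u''(c) ≥ 0` at an interior
minimum while `1 - c²` vanishes at `±1`. Hence `L[u] ≥ 0` forces `u ≥ 0`, i.e. `L` satisfies a
comparison principle. The barrier `w = (2x² + 4)/5` has `L[w] = 14x²/5 ≤ 3|x| = L[Y]` on `[-1,1]`,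
so `Y ≥ w`, and `w > |x|` because `2t² - 5t + 4` has negative discriminant.
-/

open Filter Topology

theorem IsMinOn.mul_hasDerivWithinAt_nonneg {f : ℝ → ℝ} {s : Set ℝ} {x y f' : ℝ}
    (hmin : IsMinOn f s x) (hf : HasDerivWithinAt f f' s x) (hseg : segment ℝ x y ⊆ s) :
    0 ≤ (y - x) * f' := by
  simpa [mul_comm] using hmin.localize.hasFDerivWithinAt_nonneg hf.hasFDerivWithinAt
    (sub_mem_posTangentConeAt_of_segment_subset hseg)

theorem IsLocalMin.nonneg_of_hasDerivAt_hasDerivAt {f f' : ℝ → ℝ} {a f'' : ℝ}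
    (hmin : IsLocalMin f a) (hf : ∀ᶠ x in 𝓝 a, HasDerivAt f (f' x) x)
    (hf' : HasDerivAt f' f'' a) : 0 ≤ f'' := by
  by_contra! hneg
  have hderiv : deriv f =ᶠ[𝓝 a] f' := hf.mono fun x hx => hx.deriv
  have hmax : IsLocalMax f a :=
    isLocalMax_of_deriv_deriv_neg (by rwa [hderiv.deriv_eq, hf'.deriv])
      (by rw [hderiv.eq_of_nhds]; exact hmin.hasDerivAt_eq_zero hf.self_of_nhds)
      hf.self_of_nhds.continuousAt
  -- a local minimum that is also a local maximum makes `f` locally constant, so `f'' = 0`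
  have hconst : f =ᶠ[𝓝 a] fun _ => f a := (hmin.and hmax).mono fun x hx => le_antisymm hx.2 hx.1
  have hf'_zero : f' =ᶠ[𝓝 a] fun _ => 0 := by
    filter_upwards [hconst.eventually_nhds, hf] with x hx hfx
    exact hfx.unique ((hasDerivAt_const x (f a)).congr_of_eventuallyEq hx)
  have := hf'.unique ((hasDerivAt_const a 0).congr_of_eventuallyEq hf'_zero)
  linarith

theorem IsC2On.sub {z z' z'' w w' w'' : ℝ → ℝ} (hz : IsC2On z z' z'') (hw : IsC2On w w' w'') :
    IsC2On (z - w) (z' - w') (z'' - w'') :=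
  ⟨fun x hx => (hz.1 x hx).sub (hw.1 x hx), fun x hx => (hz.2.1 x hx).sub (hw.2.1 x hx),
    hz.2.2.sub hw.2.2⟩

theorem Lop_sub (z z' z'' w w' w'' : ℝ → ℝ) (x : ℝ) :
    Lop (z - w) (z' - w') (z'' - w'') x = Lop z z' z'' x - Lop w w' w'' x := by
  simp only [Lop, Pi.sub_apply]
  ring

theorem Lop_le_of_isMinOn {u u' u'' : ℝ → ℝ} {c : ℝ} (hu : IsC2On u u' u'')
    (hc : c ∈ Icc (-1 : ℝ) 1) (hmin : IsMinOn u (Icc (-1 : ℝ) 1) c) :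
    Lop u u' u'' c ≤ u c := by
  have hfirst : 0 ≤ (0 - c) * u' c := hmin.mul_hasDerivWithinAt_nonneg (hu.1 c hc)
    ((convex_Icc _ _).segment_subset hc ⟨by norm_num, by norm_num⟩)
  have hsecond : 0 ≤ (1 - c ^ 2) * u'' c := by
    rcases hc.1.eq_or_lt with rfl | hleft
    · norm_num
    rcases hc.2.eq_or_lt with rfl | hright
    · norm_num
    have hnhds : Icc (-1 : ℝ) 1 ∈ 𝓝 c := Icc_mem_nhds hleft hright
    have hderiv : ∀ᶠ x in 𝓝 c, HasDerivAt u (u' x) x := by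
      filter_upwards [Ioo_mem_nhds hleft hright] with x hx
      exact (hu.1 x (Ioo_subset_Icc_self hx)).hasDerivAt (Icc_mem_nhds hx.1 hx.2)
    exact mul_nonneg (by nlinarith)
      ((hmin.isLocalMin hnhds).nonneg_of_hasDerivAt_hasDerivAt hderiv
        ((hu.2.1 c hc).hasDerivAt hnhds))
  simp only [Lop]
  linarith

theorem nonneg_of_Lop_nonneg {u u' u'' : ℝ → ℝ} (hu : IsC2On u u' u'')
    (hL : ∀ x ∈ Icc (-1 : ℝ) 1, 0 ≤ Lop u u' u'' x) : ∀ x ∈ Icc (-1 : ℝ) 1, 0 ≤ u x := by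
  obtain ⟨c, hc, hmin⟩ := isCompact_Icc.exists_isMinOn (nonempty_Icc.mpr (by norm_num))
    (fun x hx => (hu.1 x hx).continuousWithinAt)
  intro x hx
  calc 0 ≤ Lop u u' u'' c := hL c hc
    _ ≤ u c := Lop_le_of_isMinOn hu hc hmin
    _ ≤ u x := hmin hx

theorem le_of_Lop_le {u u' u'' v v' v'' : ℝ → ℝ} (hu : IsC2On u u' u'') (hv : IsC2On v v' v'')
    (hL : ∀ x ∈ Icc (-1 : ℝ) 1, Lop u u' u'' x ≤ Lop v v' v'' x) :
    ∀ x ∈ Icc (-1 : ℝ) 1, u x ≤ v x := by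
  intro x hx
  have := nonneg_of_Lop_nonneg (hv.sub hu) (fun x hx => by rw [Lop_sub]; linarith [hL x hx]) x hx
  simpa using this

theorem isC2On_barrier :
    IsC2On (fun x => (2 * x ^ 2 + 4) / 5) (fun x => 4 * x / 5) (fun _ => 4 / 5) := by
  refine ⟨fun x _ => HasDerivAt.hasDerivWithinAt ?_, fun x _ => HasDerivAt.hasDerivWithinAt ?_,
    continuousOn_const⟩
  · exact ((((hasDerivAt_pow 2 x).const_mul 2).add_const 4).div_const 5).congr_deriv
      (by norm_num; ring)
  · exact (((hasDerivAt_id' x).const_mul 4).div_const 5).congr_deriv (by norm_num)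

/-- If `Y` is a `C²` solution of `L[Y](x) = 3|x|` on `[-1,1]`, then `Y(x) > |x|`
everywhere; equivalently the functions `U₁ = Y - x` and `V₁ = Y + x` are
strictly positive on all of `[-1,1]`. -/
theorem Y1_gt_abs (Y Y' Y'' : ℝ → ℝ)
    (hC2 : IsC2On Y Y' Y'')
    (hL : ∀ x ∈ Icc (-1 : ℝ) 1, Lop Y Y' Y'' x = 3 * |x|) :
    ∀ x ∈ Icc (-1 : ℝ) 1, |x| < Y x ∧ 0 < Y x - x ∧ 0 < Y x + x := by
  have hw_le : ∀ x ∈ Icc (-1 : ℝ) 1, (2 * x ^ 2 + 4) / 5 ≤ Y x :=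
    le_of_Lop_le isC2On_barrier hC2 fun x hx => by
      have : |x| ≤ 1 := abs_le.mpr hx
      rw [hL x hx, Lop]
      nlinarith [sq_abs x, abs_nonneg x]
  intro x hx
  have hw_gt : |x| < (2 * x ^ 2 + 4) / 5 := by nlinarith [sq_abs x, sq_nonneg (|x| - 5 / 4)]
  have habs : |x| < Y x := hw_gt.trans_le (hw_le x hx)
  exact ⟨habs, by linarith [le_abs_self x], by linarith [neg_abs_le x]⟩
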